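/- In the discrete-time adaptation of the expressivity counterexample, where every transition of the models M and M' (built from the agent templates a and a' respectively) consumes exactly 1 unit of time, the concrete models CM and CM' are the tree-unfoldings of M and M' and are alternating-bisimilar with M and M' respectively; consequently (M, q0q0) and (M', q0'q0') satisfy the same formulas of TATL_S^D for all strategy types S ∈ {ir, Ir, iR, IR}, while the STCTL formula φ ≡ ⟨⟨1⟩⟩(∃F_{[0,∞)} p ∧ ∃G_{[0,∞)} ¬p) holds in (M, q0q0) but not in (M', q0'q0') for all strategy types S. -/
import Mathlib


/-- Actions: `a`, `a1`, `a2` stand for α, α₁, α₂ (agent 1) and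
`b`, `b1`, `b2` for β, β₁, β₂ (agent 2). -/
inductive Ac | a | a1 | a2 | b | b1 | b2
deriving DecidableEq

/-- States of `M` (two copies of the agent template `a`, identified with the
template states). -/
inductive StM | q0 | q1 | q2 | q3
deriving DecidableEq

/-- States of `M'` (two copies of the template `a'`). -/
inductive StM' | q0 | q1 | q2
deriving DecidableEq

/-- A two-agent concurrent model. -/
structure CGS where
  State : Type
  proto : Fin 2 → State → Set Ac
  trans : State → (Fin 2 → Ac) → State → Prop
  labelP : State → Prop

def protoM (i : Fin 2) (s : StM) : Set Ac :=
  if i = 0 then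
    match s with
    | .q0 => {Ac.a}
    | .q1 => {Ac.a1, Ac.a2}
    | .q2 => {Ac.a}
    | .q3 => {Ac.a1, Ac.a2}
  else
    match s with
    | .q0 => {Ac.b1, Ac.b2}
    | _ => {Ac.b}

/-- Transitions of `M`: q0 →(α,β1) q1, q0 →(α,β2) q3, q1 →(α2,β) q2, q3 →(α2,β) q2,
self-loops (α1,β) on q1 and q3, and (α,β) on q2. -/
def transM (s : StM) (c : Fin 2 → Ac) (s' : StM) : Prop :=
  (s = .q0 ∧ c 0 = Ac.a ∧ c 1 = Ac.b1 ∧ s' = .q1) ∨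
  (s = .q0 ∧ c 0 = Ac.a ∧ c 1 = Ac.b2 ∧ s' = .q3) ∨
  (s = .q1 ∧ c 0 = Ac.a2 ∧ c 1 = Ac.b ∧ s' = .q2) ∨
  (s = .q3 ∧ c 0 = Ac.a2 ∧ c 1 = Ac.b ∧ s' = .q2) ∨
  (s = .q1 ∧ c 0 = Ac.a1 ∧ c 1 = Ac.b ∧ s' = .q1) ∨
  (s = .q3 ∧ c 0 = Ac.a1 ∧ c 1 = Ac.b ∧ s' = .q3) ∨
  (s = .q2 ∧ c 0 = Ac.a ∧ c 1 = Ac.b ∧ s' = .q2)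

def Mcgs : CGS := ⟨StM, protoM, transM, fun s => s = .q2⟩

def protoM' (i : Fin 2) (s : StM') : Set Ac :=
  if i = 0 then
    match s with
    | .q0 => {Ac.a}
    | .q1 => {Ac.a1, Ac.a2}
    | .q2 => {Ac.a}
  else
    match s with
    | .q0 => {Ac.b1, Ac.b2}
    | _ => {Ac.b}

/-- Transitions of `M'`: q0' →(α,β1) q1', q0' →(α,β2) q1', q1' →(α2,β) q2',
self-loop (α1,β) on q1' and (α,β) on q2'. -/
def transM' (s : StM') (c : Fin 2 → Ac) (s' : StM') : Prop :=
  (s = .q0 ∧ c 0 = Ac.a ∧ c 1 = Ac.b1 ∧ s' = .q1) ∨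
  (s = .q0 ∧ c 0 = Ac.a ∧ c 1 = Ac.b2 ∧ s' = .q1) ∨
  (s = .q1 ∧ c 0 = Ac.a2 ∧ c 1 = Ac.b ∧ s' = .q2) ∨
  (s = .q1 ∧ c 0 = Ac.a1 ∧ c 1 = Ac.b ∧ s' = .q1) ∨
  (s = .q2 ∧ c 0 = Ac.a ∧ c 1 = Ac.b ∧ s' = .q2)

def M'cgs : CGS := ⟨StM', protoM', transM', fun s => s = .q2⟩

/-- The concrete model of the discrete-time adaptation of `G` in which every
transition consumes exactly `1` unit of time: states are pairs (state, accumulated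
time), and every transition increases the accumulated time by `1`.  (This is the
unfolding of `G` along time.) -/
def concrete (G : CGS) : CGS where
  State := G.State × ℕ
  proto := fun i p => G.proto i p.1
  trans := fun p c p' => G.trans p.1 c p'.1 ∧ p'.2 = p.2 + 1
  labelP := fun p => G.labelP p.1

/-- A protocol-compliant joint action at `s`. -/
def jointOK (G : CGS) (s : G.State) (c : Fin 2 → Ac) : Prop :=
  ∀ i, c i ∈ G.proto i s

/-- One direction of alternating simulation between related states. -/
def simStep (G G' : CGS) (R : G.State → G'.State → Prop)
    (s : G.State) (s' : G'.State) : Prop :=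
  ∀ A : Set (Fin 2), ∀ c : Fin 2 → Ac, (∀ i ∈ A, c i ∈ G.proto i s) →
    ∃ c' : Fin 2 → Ac, (∀ i ∈ A, c' i ∈ G'.proto i s') ∧
      ∀ d' : Fin 2 → Ac, jointOK G' s' d' → (∀ i ∈ A, d' i = c' i) →
        ∀ t' : G'.State, G'.trans s' d' t' →
          ∃ d : Fin 2 → Ac, jointOK G s d ∧ (∀ i ∈ A, d i = c i) ∧
            ∃ t : G.State, G.trans s d t ∧ R t t'

/-- Alternating bisimulation. -/
def AltBisim (G G' : CGS) (R : G.State → G'.State → Prop) : Prop :=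
  ∀ s s', R s s' →
    (G.labelP s ↔ G'.labelP s') ∧
    simStep G G' R s s' ∧
    simStep G' G (fun u v => R v u) s' s

/-- Strategy types. -/
inductive StrategyType | ir | Ir | iR | IR

/-- A strategy of agent 1: a function from histories (strict past, most recent
first, plus the current state) to actions. -/
def Strategy (G : CGS) : Type := List G.State → G.State → Ac

def Memoryless {G : CGS} (σ : Strategy G) : Prop :=
  ∀ h1 h2 s, σ h1 s = σ h2 s

def Uniform {G : CGS} {L : Type} (loc : G.State → L) (σ : Strategy G) : Prop :=
  ∀ h1 s1 h2 s2, h1.map loc = h2.map loc → loc s1 = loc s2 → σ h1 s1 = σ h2 s2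

def StratOK (G : CGS) {L : Type} (loc : G.State → L) :
    StrategyType → Strategy G → Prop
  | .ir, σ => Memoryless σ ∧ Uniform loc σ
  | .Ir, σ => Memoryless σ
  | .iR, σ => Uniform loc σ
  | .IR, _ => True

def hist {St : Type} (π : ℕ → St) (k : ℕ) : List St :=
  ((List.range k).map π).reverse

def Outcome (G : CGS) (σ : Strategy G) (s0 : G.State) (π : ℕ → G.State) : Prop :=
  π 0 = s0 ∧
  ∀ k, ∃ c : Fin 2 → Ac, jointOK G (π k) c ∧
    c 0 = σ (hist π k) (π k) ∧ G.trans (π k) c (π (k + 1))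

/-- `(G, (s0,0)) ⊨ ⟨⟨1⟩⟩(∃F_{[0,∞)} p ∧ ∃G_{[0,∞)} ¬p)` under `S`-strategies, in the
discrete-time concrete model of `G`: agent 1 has a protocol-compliant strategy of
type `S` whose outcome set contains a path on which `p` holds at some time in
`[0,∞)`, and a path on which `p` fails at every time in `[0,∞)`. -/
def SatPhiD (G : CGS) (S : StrategyType) (s0 : G.State) : Prop :=
  ∃ σ : Strategy (concrete G),
    (∀ h s, σ h s ∈ (concrete G).proto 0 s) ∧
    StratOK (concrete G) id S σ ∧
    (∃ π : ℕ → (concrete G).State, Outcome (concrete G) σ (s0, 0) π ∧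
      ∃ k, 0 ≤ (π k).2 ∧ (concrete G).labelP (π k)) ∧
    (∃ π : ℕ → (concrete G).State, Outcome (concrete G) σ (s0, 0) π ∧
      ∀ k, 0 ≤ (π k).2 → ¬ (concrete G).labelP (π k))


/-! ### Auxiliary lemmas -/

/-- The time-unfolding of any CGS is alternating bisimilar to the base model. -/
lemma altBisim_concrete (G : CGS) :
    AltBisim (concrete G) G (fun p t => p.1 = t) := by
  intro p t hpt
  subst hpt
  refine ⟨Iff.rfl, ?_, ?_⟩
  · intro A c hc
    refine ⟨c, hc, ?_⟩
    intro d' hd' hag t' ht'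
    exact ⟨d', hd', hag, (t', p.2 + 1), ⟨ht', rfl⟩, rfl⟩
  · intro A c hc
    refine ⟨c, hc, ?_⟩
    intro d' hd' hag p' hp'
    exact ⟨d', hd', hag, p'.1, hp'.1, rfl⟩

/-- The alternating bisimulation relating `M` and `M'`. -/
def RMM : StM → StM' → Prop
  | .q0, .q0 => True
  | .q1, .q1 => True
  | .q3, .q1 => True
  | .q2, .q2 => True
  | _, _ => False

lemma protoEqMM : ∀ s s', RMM s s' → ∀ i, protoM i s = protoM' i s' := by
  intro s s' h i
  cases s <;> cases s' <;> first | rfl | exact h.elim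

lemma transMatchMM : ∀ s s', RMM s s' → ∀ (d : Fin 2 → Ac) t', transM' s' d t' →
    ∃ t, transM s d t ∧ RMM t t' := by
  intro s s' h d t' ht
  cases s <;> cases s' <;> (try exact h.elim) <;>
    rcases ht with ⟨h1,h2,h3,h4⟩|⟨h1,h2,h3,h4⟩|⟨h1,h2,h3,h4⟩|⟨h1,h2,h3,h4⟩|⟨h1,h2,h3,h4⟩ <;>
    (try exact StM'.noConfusion h1) <;> subst h4
  case q0.q0 => exact ⟨.q1, Or.inl ⟨rfl, h2, h3, rfl⟩, trivial⟩
  case q0.q0 => exact ⟨.q3, Or.inr (Or.inl ⟨rfl, h2, h3, rfl⟩), trivial⟩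
  case q1.q1 => exact ⟨.q2, Or.inr (Or.inr (Or.inl ⟨rfl, h2, h3, rfl⟩)), trivial⟩
  case q1.q1 => exact ⟨.q1, Or.inr (Or.inr (Or.inr (Or.inr (Or.inl ⟨rfl, h2, h3, rfl⟩)))), trivial⟩
  case q3.q1 => exact ⟨.q2, Or.inr (Or.inr (Or.inr (Or.inl ⟨rfl, h2, h3, rfl⟩))), trivial⟩
  case q3.q1 => exact ⟨.q3, Or.inr (Or.inr (Or.inr (Or.inr (Or.inr (Or.inl ⟨rfl, h2, h3, rfl⟩))))), trivial⟩
  case q2.q2 => exact ⟨.q2, Or.inr (Or.inr (Or.inr (Or.inr (Or.inr (Or.inr ⟨rfl, h2, h3, rfl⟩))))), trivial⟩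

lemma transMatchM'M : ∀ s s', RMM s s' → ∀ (d : Fin 2 → Ac) t, transM s d t →
    ∃ t', transM' s' d t' ∧ RMM t t' := by
  intro s s' h d t ht
  cases s <;> cases s' <;> (try exact h.elim) <;>
    rcases ht with ⟨h1,h2,h3,h4⟩|⟨h1,h2,h3,h4⟩|⟨h1,h2,h3,h4⟩|⟨h1,h2,h3,h4⟩|⟨h1,h2,h3,h4⟩|⟨h1,h2,h3,h4⟩|⟨h1,h2,h3,h4⟩ <;>
    (try exact StM.noConfusion h1) <;> subst h4
  case q0.q0 => exact ⟨.q1, Or.inl ⟨rfl, h2, h3, rfl⟩, trivial⟩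
  case q0.q0 => exact ⟨.q1, Or.inr (Or.inl ⟨rfl, h2, h3, rfl⟩), trivial⟩
  case q1.q1 => exact ⟨.q2, Or.inr (Or.inr (Or.inl ⟨rfl, h2, h3, rfl⟩)), trivial⟩
  case q1.q1 => exact ⟨.q1, Or.inr (Or.inr (Or.inr (Or.inl ⟨rfl, h2, h3, rfl⟩))), trivial⟩
  case q3.q1 => exact ⟨.q2, Or.inr (Or.inr (Or.inl ⟨rfl, h2, h3, rfl⟩)), trivial⟩
  case q3.q1 => exact ⟨.q1, Or.inr (Or.inr (Or.inr (Or.inl ⟨rfl, h2, h3, rfl⟩))), trivial⟩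
  case q2.q2 => exact ⟨.q2, Or.inr (Or.inr (Or.inr (Or.inr ⟨rfl, h2, h3, rfl⟩))), trivial⟩

lemma bisimMM' : AltBisim Mcgs M'cgs RMM := by
  intro s s' h
  refine ⟨?_, ?_, ?_⟩
  · cases s <;> cases s' <;> first | exact h.elim | simp [Mcgs, M'cgs]
  · intro A c hc
    refine ⟨c, ?_, ?_⟩
    · intro i hi
      have hx : c i ∈ protoM i s := hc i hi
      exact show c i ∈ protoM' i s' from protoEqMM s s' h i ▸ hx
    · intro d' hd' hag t' ht'
      obtain ⟨t, htr, hR⟩ := transMatchMM s s' h d' t' ht'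
      refine ⟨d', ?_, hag, t, htr, hR⟩
      intro i
      have hx : d' i ∈ protoM' i s' := hd' i
      exact show d' i ∈ protoM i s from (protoEqMM s s' h i).symm ▸ hx
  · intro A c hc
    refine ⟨c, ?_, ?_⟩
    · intro i hi
      have hx : c i ∈ protoM' i s' := hc i hi
      exact show c i ∈ protoM i s from (protoEqMM s s' h i).symm ▸ hx
    · intro d hd hag t ht
      obtain ⟨t', htr, hR⟩ := transMatchM'M s s' h d t ht
      refine ⟨d, ?_, hag, t', htr, hR⟩
      intro i
      have hx : d i ∈ protoM i s := hd i
      exact show d i ∈ protoM' i s' from protoEqMM s s' h i ▸ hx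

/-! ### The witnessing strategy and paths in `M` -/

def sigM : Strategy (concrete Mcgs) := fun _ p =>
  match p.1 with
  | .q0 => Ac.a
  | .q1 => Ac.a1
  | .q2 => Ac.a
  | .q3 => Ac.a2

def piG : ℕ → StM × ℕ := fun k => (if k = 0 then .q0 else .q1, k)
def piF : ℕ → StM × ℕ := fun k => (if k = 0 then .q0 else if k = 1 then .q3 else .q2, k)

lemma outcome_piF : Outcome (concrete Mcgs) sigM (StM.q0, 0) piF := by
  refine ⟨rfl, fun k => ?_⟩
  match k with
  | 0 =>
    refine ⟨![Ac.a, Ac.b2], ?_, rfl, Or.inr (Or.inl ⟨rfl, rfl, rfl, rfl⟩), rfl⟩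
    intro i; fin_cases i <;> simp [concrete, Mcgs, protoM, piF]
  | 1 =>
    refine ⟨![Ac.a2, Ac.b], ?_, rfl,
      Or.inr (Or.inr (Or.inr (Or.inl ⟨rfl, rfl, rfl, rfl⟩))), rfl⟩
    intro i; fin_cases i <;> simp [concrete, Mcgs, protoM, piF]
  | (n+2) =>
    refine ⟨![Ac.a, Ac.b], ?_, rfl,
      Or.inr (Or.inr (Or.inr (Or.inr (Or.inr (Or.inr ⟨rfl, rfl, rfl, rfl⟩))))), rfl⟩
    intro i; fin_cases i <;> simp [concrete, Mcgs, protoM, piF]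

lemma outcome_piG : Outcome (concrete Mcgs) sigM (StM.q0, 0) piG := by
  refine ⟨rfl, fun k => ?_⟩
  match k with
  | 0 =>
    refine ⟨![Ac.a, Ac.b1], ?_, rfl, Or.inl ⟨rfl, rfl, rfl, rfl⟩, rfl⟩
    intro i; fin_cases i <;> simp [concrete, Mcgs, protoM, piG]
  | (n+1) =>
    refine ⟨![Ac.a1, Ac.b], ?_, rfl,
      Or.inr (Or.inr (Or.inr (Or.inr (Or.inl ⟨rfl, rfl, rfl, rfl⟩)))), rfl⟩
    intro i; fin_cases i <;> simp [concrete, Mcgs, protoM, piG]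

lemma satM : ∀ S, SatPhiD Mcgs S StM.q0 := by
  intro S
  refine ⟨sigM, ?_, ?_, ⟨piF, outcome_piF, 2, Nat.zero_le _, rfl⟩,
    ⟨piG, outcome_piG, ?_⟩⟩
  · intro h s
    rcases s with ⟨s1, n⟩
    cases s1 <;> simp [sigM, concrete, Mcgs, protoM]
  · have hm : Memoryless sigM := fun _ _ _ => rfl
    have hu : Uniform (G := concrete Mcgs) id sigM := by
      intro h1 s1 h2 s2 _ hs
      have h12 : s1 = s2 := hs
      rw [h12]
      exact hm h1 h2 s2
    cases S
    · exact ⟨hm, hu⟩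
    · exact hm
    · exact hu
    · trivial
  · intro k _ h
    rcases k with _ | n <;> cases h

/-! ### No strategy works in `M'` -/

lemma time_of_outcome {G : CGS} {σ : Strategy (concrete G)} {s0 : G.State}
    {π : ℕ → (concrete G).State} (h : Outcome (concrete G) σ (s0, 0) π) :
    ∀ k, (π k).2 = k := by
  intro k
  induction k with
  | zero => rw [h.1]
  | succ n ih =>
    obtain ⟨c, _, _, htr⟩ := h.2 n
    rw [htr.2, ih]

lemma stepM'_q1 {s t : StM'} {c : Fin 2 → Ac} (h : transM' s c t)
    (hs : s ≠ .q2) (ht : t ≠ .q2) : t = .q1 := by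
  rcases h with ⟨h1,h2,h3,h4⟩|⟨h1,h2,h3,h4⟩|⟨h1,h2,h3,h4⟩|⟨h1,h2,h3,h4⟩|⟨h1,h2,h3,h4⟩ <;>
    simp_all

lemma stepM'_toq2 {s t : StM'} {c : Fin 2 → Ac} (h : transM' s c t)
    (ht : t = .q2) (hs : s ≠ .q2) : s = .q1 ∧ c 0 = Ac.a2 := by
  rcases h with ⟨h1,h2,h3,h4⟩|⟨h1,h2,h3,h4⟩|⟨h1,h2,h3,h4⟩|⟨h1,h2,h3,h4⟩|⟨h1,h2,h3,h4⟩ <;>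
    simp_all

lemma stepM'_loop {s t : StM'} {c : Fin 2 → Ac} (h : transM' s c t)
    (hs : s = .q1) (ht : t = .q1) : c 0 = Ac.a1 := by
  rcases h with ⟨h1,h2,h3,h4⟩|⟨h1,h2,h3,h4⟩|⟨h1,h2,h3,h4⟩|⟨h1,h2,h3,h4⟩|⟨h1,h2,h3,h4⟩ <;>
    simp_all

lemma notSatM' : ∀ S, ¬ SatPhiD M'cgs S StM'.q0 := by
  intro S hsat
  classical
  obtain ⟨σ, hproto, hOK, ⟨π, hπ, k0, -, hk0⟩, ⟨π', hπ', hnever⟩⟩ := hsat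
  have hnever' : ∀ k, (π' k).1 ≠ StM'.q2 := fun k h => hnever k (Nat.zero_le _) h
  -- the G-path stays in q1 from time 1 on
  have hq1' : ∀ k, (π' (k + 1)).1 = StM'.q1 := by
    intro k
    obtain ⟨c, _, _, htr⟩ := hπ'.2 k
    exact stepM'_q1 htr.1 (hnever' k) (hnever' (k + 1))
  -- the first time the F-path hits q2
  have hex : ∃ k, (π k).1 = StM'.q2 := ⟨k0, hk0⟩
  set m := Nat.find hex with hmdef
  have hm : (π m).1 = StM'.q2 := Nat.find_spec hex
  have hlt : ∀ j, j < m → (π j).1 ≠ StM'.q2 := fun j hj => Nat.find_min hex hj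
  have hπ0 : (π 0).1 = StM'.q0 := by rw [hπ.1]
  have hm0 : m ≠ 0 := by
    intro h; rw [h, hπ0] at hm; cases hm
  obtain ⟨n, hn⟩ : ∃ n, m = n + 1 := ⟨m - 1, (Nat.succ_pred_eq_of_ne_zero hm0).symm⟩
  obtain ⟨c, _, hc0, htr⟩ := hπ.2 n
  have hπm : (π (n + 1)).1 = StM'.q2 := by rw [← hn]; exact hm
  have hnq : (π n).1 ≠ StM'.q2 := hlt n (by omega)
  obtain ⟨hq1n, hca2⟩ := stepM'_toq2 htr.1 hπm hnq
  -- n ≥ 1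
  have hn0 : n ≠ 0 := by
    intro h; rw [h, hπ0] at hq1n; cases hq1n
  -- the F-path also stays in q1 up to time n
  have hq1π : ∀ j, j + 1 ≤ n → (π (j + 1)).1 = StM'.q1 := by
    intro j hj
    obtain ⟨c', _, _, htr'⟩ := hπ.2 j
    exact stepM'_q1 htr'.1 (hlt j (by omega)) (hlt (j + 1) (by omega))
  -- the two paths agree up to time n
  have hprefix : ∀ i, i ≤ n → π i = π' i := by
    intro i hi
    have h2 : (π i).2 = (π' i).2 := by
      rw [time_of_outcome hπ, time_of_outcome hπ']
    have h1 : (π i).1 = (π' i).1 := by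
      rcases i with _ | j
      · rw [hπ0, hπ'.1]
      · rcases Nat.lt_or_ge (j + 1) n with hlt' | hge
        · rw [hq1π j (by omega), hq1' j]
        · have heq : j + 1 = n := by omega
          have hq : (π (j + 1)).1 = StM'.q1 := by rw [heq]; exact hq1n
          rw [hq, hq1' j]
    exact Prod.ext h1 h2
  -- histories agree
  have hhist : hist π n = hist π' n := by
    unfold hist
    congr 1
    apply List.map_congr_left
    intro a ha
    exact hprefix a (by have := List.mem_range.mp ha; omega)
  -- the G-path plays a1 at time n, the F-path plays a2, same history: contradiction
  obtain ⟨j, rfl⟩ : ∃ j, n = j + 1 := ⟨n - 1, (Nat.succ_pred_eq_of_ne_zero hn0).symm⟩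
  obtain ⟨c', _, hc0', htr'⟩ := hπ'.2 (j + 1)
  have hca1 : c' 0 = Ac.a1 := stepM'_loop htr'.1 (hq1' j) (hq1' (j + 1))
  rw [hc0] at hca2
  rw [hc0'] at hca1
  rw [hhist, hprefix (j + 1) le_rfl] at hca2
  rw [hca2] at hca1
  cases hca1

/-- **In the discrete-time adaptation of the expressivity counterexample** (every
transition of `M` and `M'` consumes exactly `1` unit of time): the concrete models
`CM = concrete M` and `CM' = concrete M'` (the unfoldings over accumulated time) are
alternating-bisimilar with `M` and `M'` respectively; consequently — as alternating
bisimulation preserves TATL satisfaction (`hPreserve`) — the pointed models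
`(M, q0q0)` and `(M', q0'q0')` satisfy the same formulas of `TATL_S^D` for all
strategy types `S`, while the STCTL formula
`φ ≡ ⟨⟨1⟩⟩(∃F_{[0,∞)} p ∧ ∃G_{[0,∞)} ¬p)` holds in `(M, q0q0)` but not in
`(M', q0'q0')`, for all strategy types `S`. -/
theorem discrete_time_counterexample
    -- TATL_S^D, kept abstract: formulas and satisfaction over pointed models
    (TATLFormula : StrategyType → Type)
    (SatTATL : (S : StrategyType) → (G : CGS) → G.State → TATLFormula S → Prop)
    -- alternating bisimulation preserves TATL satisfaction
    (hPreserve : ∀ (S : StrategyType) (G G' : CGS) (R : G.State → G'.State → Prop),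
      AltBisim G G' R → ∀ s s', R s s' →
        ∀ φ : TATLFormula S, SatTATL S G s φ ↔ SatTATL S G' s' φ) :
    (∃ R : (concrete Mcgs).State → StM → Prop,
      AltBisim (concrete Mcgs) Mcgs R ∧ R (StM.q0, 0) StM.q0) ∧
    (∃ R : (concrete M'cgs).State → StM' → Prop,
      AltBisim (concrete M'cgs) M'cgs R ∧ R (StM'.q0, 0) StM'.q0) ∧
    (∀ (S : StrategyType) (φ : TATLFormula S),
      SatTATL S Mcgs StM.q0 φ ↔ SatTATL S M'cgs StM'.q0 φ) ∧
    (∀ S : StrategyType, SatPhiD Mcgs S StM.q0) ∧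
    (∀ S : StrategyType, ¬ SatPhiD M'cgs S StM'.q0) := by
  refine ⟨⟨fun p t => p.1 = t, altBisim_concrete Mcgs, rfl⟩,
          ⟨fun p t => p.1 = t, altBisim_concrete M'cgs, rfl⟩,
          fun S φ => hPreserve S Mcgs M'cgs RMM bisimMM' StM.q0 StM'.q0 (by trivial) φ,
          satM, notSatM'⟩
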